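/- If a = 1/2, then the fixed point set of V_13 on S² equals {x ∈ S² : x₂ = 0} ∪ {x ∈ S² : x₁ = x₃}. -/

import Mathlib

/-! On the plane `x₁ + x₂ + x₃ = 1` the displacement `V13 (1/2) p - p` is
`(0, x₂ (x₃ - x₁), -x₂ (x₃ - x₁))`, so the fixed points are exactly where `x₂ (x₃ - x₁) = 0`. -/

def V13 (a : ℝ) (p : ℝ × ℝ × ℝ) : ℝ × ℝ × ℝ :=
  (p.1^2 + 2*a*p.1*(1-p.1), p.2.1^2 + 2*p.2.1*p.2.2, p.2.2^2 + 2*(1-a)*p.1*(1-p.1))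

def S2 : Set (ℝ × ℝ × ℝ) :=
  {p | 0 ≤ p.1 ∧ 0 ≤ p.2.1 ∧ 0 ≤ p.2.2 ∧ p.1 + p.2.1 + p.2.2 = 1}

lemma V13_fst_sub (a : ℝ) (p : ℝ × ℝ × ℝ) :
    (V13 a p).1 - p.1 = (2 * a - 1) * p.1 * (1 - p.1) := by
  simp only [V13]; ring

lemma V13_snd_fst_sub (a : ℝ) {p : ℝ × ℝ × ℝ} (hp : p.1 + p.2.1 + p.2.2 = 1) :
    (V13 a p).2.1 - p.2.1 = p.2.1 * (p.2.2 - p.1) := by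
  simp only [V13]; linear_combination p.2.1 * hp

lemma V13_snd_snd_sub (a : ℝ) {p : ℝ × ℝ × ℝ} (hp : p.1 + p.2.1 + p.2.2 = 1) :
    (V13 a p).2.2 - p.2.2 = (1 - 2 * a) * p.1 * (1 - p.1) - p.2.1 * (p.2.2 - p.1) := by
  simp only [V13]; linear_combination (p.2.2 - p.1) * hp

lemma V13_half_eq_self_iff {p : ℝ × ℝ × ℝ} (hp : p.1 + p.2.1 + p.2.2 = 1) :
    V13 (1/2) p = p ↔ p.2.1 * (p.2.2 - p.1) = 0 := by
  have h₁ := V13_fst_sub (1/2) p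
  have h₂ := V13_snd_fst_sub (1/2) hp
  have h₃ := V13_snd_snd_sub (1/2) hp
  constructor
  · intro hfix
    rw [hfix, sub_self] at h₂
    exact h₂.symm
  · intro h0
    ext <;> linarith

theorem V13_fixed_points_half :
    {p ∈ S2 | V13 (1/2) p = p} =
      {p ∈ S2 | p.2.1 = 0} ∪ {p ∈ S2 | p.1 = p.2.2} := by
  ext p
  simp only [Set.mem_union, Set.mem_ofPred_eq, ← and_or_left]
  refine and_congr_right fun hp => ?_
  rw [V13_half_eq_self_iff hp.2.2.2, mul_eq_zero, sub_eq_zero, eq_comm (a := p.2.2)]
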